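/- There is a universal constant C > 0 with the following property. Let X be a compact metric space, let 𝓕 be a complex Banach space that is a linear subspace of C(X; ℂ) compactly embedded in C(X; ℂ) (its unit ball U_𝓕 is compact in the sup-norm metric), and let M > 0 be such that L := limsup_{ε→0} H_ε(U_𝓕) / (log₂(1/ε))^M satisfies L ∈ (0, ∞). There exists a prediction strategy producing complex predictions that guarantees, for every sequence of signals x₁, x₂, … ∈ X and observations y₁, y₂, … ∈ ℂ with |yₙ| ≤ 1: for every F ∈ 𝓕 there is N₀ such that for all N ≥ N₀, Σ_{n=1}^N |yₙ − μₙ|² ≤ Σ_{n=1}^N |yₙ − F(xₙ)|² + C·L·(log₂ N)^M. -/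

import Mathlib

open scoped BigOperators

universe u v

/-- Given a prediction strategy `σ` and sequences of signals `x` and observations `y`,
`preds σ x y n` is the prediction output on round `n`. -/
noncomputable def preds {X P : Type*} (σ : List (X × P) → X → P)
    (x : ℕ → X) (y : ℕ → P) (n : ℕ) : P :=
  σ ((List.range n).map fun i => (x i, y i)) (x n)

/-- The minimal number of points of `A` forming an `ε`-net for `A`. -/
noncomputable def coveringNumber {E : Type*} [MetricSpace E] (A : Set E) (ε : ℝ) : ℕ :=
  sInf {n : ℕ | ∃ S : Finset E, ↑S ⊆ A ∧ S.card = n ∧ ∀ a ∈ A, ∃ b ∈ S, dist a b ≤ ε}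

/-- Metric entropy: binary logarithm of the minimal size of an `ε`-net. -/
noncomputable def metricEntropy {E : Type*} [MetricSpace E] (A : Set E) (ε : ℝ) : ℝ :=
  Real.logb 2 (coveringNumber A ε)

section Helpers

open Real Filter

lemma exp_taylor2 {t : ℝ} (ht : |t| ≤ 1) : Real.exp t ≤ 1 + t + (3/4) * t^2 := by
  have h := Real.exp_bound ht (n := 2) (by norm_num)
  have h2 : ∑ m ∈ Finset.range 2, t ^ m / (m.factorial : ℝ) = 1 + t := by
    simp [Finset.sum_range_succ]
  rw [h2] at h
  have := abs_le.1 h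
  norm_num at this
  nlinarith [this.2, sq_abs t]

lemma key_ineq {a b : ℝ} (ha : |a| ≤ 2) (hb : |b| ≤ 2) :
    Real.exp ((a^2 - (a-b)^2)/32) ≤ 1 + a*b/16 := by
  have ha' := abs_le.1 ha
  have hb' := abs_le.1 hb
  have ht : |(a^2 - (a-b)^2)/32| ≤ 1 := by
    rw [abs_div, abs_of_nonneg (by norm_num : (0:ℝ) ≤ 32), div_le_one (by norm_num)]
    have h : a^2 - (a-b)^2 = b*(2*a-b) := by ring
    rw [h, abs_mul]
    have h6 : |2*a - b| ≤ 6 := by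
      rw [abs_le]; constructor <;> linarith
    nlinarith [abs_nonneg b, abs_nonneg (2*a-b)]
  have h := exp_taylor2 ht
  have hq : (a^2 - (a-b)^2)/32 + (3/4) * ((a^2 - (a-b)^2)/32)^2 ≤ a*b/16 := by
    have h6 : |2*a - b| ≤ 6 := by
      rw [abs_le]; constructor <;> linarith
    have h1 : ((a^2 - (a-b)^2))^2 = b^2 * (2*a-b)^2 := by ring
    have h2 : (2*a-b)^2 ≤ 36 := by nlinarith [abs_nonneg (2*a-b), abs_le.1 h6]
    nlinarith [sq_nonneg b]
  linarith

noncomputable def ewaW (p : ℕ → ℝ) (e : ℕ → ℕ → ℝ) (z : ℕ → ℝ) (n : ℕ) : ℝ :=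
  ∑' k, p k * Real.exp (-(∑ i ∈ Finset.range n, (z i - e k i)^2) / 32)

noncomputable def ewaPred (p : ℕ → ℝ) (e : ℕ → ℕ → ℝ) (z : ℕ → ℝ) (n : ℕ) : ℝ :=
  (∑' k, p k * Real.exp (-(∑ i ∈ Finset.range n, (z i - e k i)^2) / 32) * e k n) /
    ewaW p e z n

theorem ewa_regret (p : ℕ → ℝ) (hp : ∀ k, 0 < p k) (hps : Summable p) (hp1 : ∑' k, p k ≤ 1)
    (e : ℕ → ℕ → ℝ) (he : ∀ k n, |e k n| ≤ 1)
    (z : ℕ → ℝ) (hz : ∀ n, |z n| ≤ 1) (K N : ℕ) :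
    ∑ n ∈ Finset.range N, (z n - ewaPred p e z n)^2 ≤
      ∑ n ∈ Finset.range N, (z n - e K n)^2 + 32 * Real.log (1 / p K) := by
  classical
  set w : ℕ → ℕ → ℝ := fun k n => p k * Real.exp (-(∑ i ∈ Finset.range n, (z i - e k i)^2) / 32)
    with hw
  have hwpos : ∀ k n, 0 < w k n := fun k n => mul_pos (hp k) (Real.exp_pos _)
  have hwle : ∀ k n, w k n ≤ p k := by
    intro k n
    have hsum : 0 ≤ ∑ i ∈ Finset.range n, (z i - e k i)^2 :=
      Finset.sum_nonneg fun i _ => sq_nonneg _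
    have h1 : Real.exp (-(∑ i ∈ Finset.range n, (z i - e k i)^2) / 32) ≤ 1 :=
      Real.exp_le_one_iff.2 (by linarith)
    calc w k n ≤ p k * 1 := mul_le_mul_of_nonneg_left h1 (le_of_lt (hp k))
      _ = p k := mul_one _
  have hsw : ∀ n, Summable (fun k => w k n) := by
    intro n
    exact hps.of_nonneg_of_le (fun k => le_of_lt (hwpos k n)) (fun k => hwle k n)
  have hWeq : ∀ n, ewaW p e z n = ∑' k, w k n := fun n => rfl
  have hWpos : ∀ n, 0 < ewaW p e z n := by
    intro n
    rw [hWeq]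
    exact lt_of_lt_of_le (hwpos 0 n) (Summable.le_tsum (hsw n) 0 fun j _ => le_of_lt (hwpos j n))
  have hswe : ∀ n m, Summable (fun k => w k n * e k m) := by
    intro n m
    apply Summable.of_norm_bounded (hsw n)
    intro k
    rw [norm_mul, norm_of_nonneg (le_of_lt (hwpos k n))]
    calc w k n * ‖e k m‖ ≤ w k n * 1 :=
          mul_le_mul_of_nonneg_left (by simpa using he k m) (le_of_lt (hwpos k n))
      _ = w k n := mul_one _
  have hnum : ∀ n, ∑' k, w k n * e k n = ewaPred p e z n * ewaW p e z n := by
    intro n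
    rw [ewaPred, div_mul_cancel₀ _ (ne_of_gt (hWpos n))]
  have hμle : ∀ n, |ewaPred p e z n| ≤ 1 := by
    intro n
    rw [ewaPred, abs_div, abs_of_pos (hWpos n), div_le_one (hWpos n)]
    calc |∑' k, w k n * e k n| ≤ ∑' k, |w k n * e k n| := by
          have := norm_tsum_le_tsum_norm (f := fun k => w k n * e k n)
            (by simpa [Real.norm_eq_abs, abs_mul] using (hswe n n).abs)
          simpa [Real.norm_eq_abs, abs_mul] using this
      _ ≤ ∑' k, w k n := by
          apply Summable.tsum_le_tsum _ (hswe n n).abs (hsw n)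
          intro k
          rw [abs_mul, abs_of_pos (hwpos k n)]
          calc w k n * |e k n| ≤ w k n * 1 :=
                mul_le_mul_of_nonneg_left (he k n) (le_of_lt (hwpos k n))
            _ = w k n := mul_one _
      _ = ewaW p e z n := (hWeq n).symm
  have step : ∀ n, ewaW p e z (n+1) ≤ ewaW p e z n * Real.exp (-(z n - ewaPred p e z n)^2 / 32) := by
    intro n
    set μ := ewaPred p e z n with hμ
    set a := z n - μ with ha
    have haa : |a| ≤ 2 := by
      rw [ha]
      calc |z n - μ| ≤ |z n| + |μ| := abs_sub _ _
        _ ≤ 1 + 1 := add_le_add (hz n) (hμle n)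
        _ = 2 := by norm_num
    set c := Real.exp (-a^2 / 32) with hc
    have hcpos : 0 < c := Real.exp_pos _
    have hWsucc : ewaW p e z (n+1) = ∑' k, w k n * Real.exp (-(z n - e k n)^2 / 32) := by
      rw [ewaW]
      congr 1
      funext k
      rw [Finset.sum_range_succ]
      rw [show (-(∑ i ∈ Finset.range n, (z i - e k i)^2 + (z n - e k n)^2)) / 32
            = (-(∑ i ∈ Finset.range n, (z i - e k i)^2)) / 32 + (-(z n - e k n)^2) / 32 by ring]
      rw [Real.exp_add, hw]
      ring
    have keyk : ∀ k, w k n * Real.exp (-(z n - e k n)^2 / 32)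
        ≤ w k n * c + (w k n * e k n - w k n * μ) * (a * c / 16) := by
      intro k
      have hb : |e k n - μ| ≤ 2 := by
        calc |e k n - μ| ≤ |e k n| + |μ| := abs_sub _ _
          _ ≤ 1 + 1 := add_le_add (he k n) (hμle n)
          _ = 2 := by norm_num
      have hk := key_ineq haa hb
      have hzn : z n - e k n = a - (e k n - μ) := by rw [ha]; ring
      have hexp : Real.exp (-(z n - e k n)^2 / 32)
          = c * Real.exp ((a^2 - (a - (e k n - μ))^2) / 32) := by
        rw [hc, ← Real.exp_add]
        congr 1
        rw [hzn]
        ring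
      rw [hexp]
      have h1 : c * Real.exp ((a^2 - (a - (e k n - μ))^2) / 32)
          ≤ c * (1 + a * (e k n - μ) / 16) :=
        mul_le_mul_of_nonneg_left hk (le_of_lt hcpos)
      calc w k n * (c * Real.exp ((a^2 - (a - (e k n - μ))^2) / 32))
          ≤ w k n * (c * (1 + a * (e k n - μ) / 16)) :=
            mul_le_mul_of_nonneg_left h1 (le_of_lt (hwpos k n))
        _ = w k n * c + (w k n * e k n - w k n * μ) * (a * c / 16) := by ring
    have hs1 : Summable (fun k => w k n * c) := (hsw n).mul_right c
    have hs2 : Summable (fun k => (w k n * e k n - w k n * μ) * (a * c / 16)) :=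
      (((hswe n n).sub ((hsw n).mul_right μ)).mul_right _)
    have hs3 : Summable (fun k => w k n * Real.exp (-(z n - e k n)^2 / 32)) := by
      apply (hsw n).of_nonneg_of_le
      · intro k; exact le_of_lt (mul_pos (hwpos k n) (Real.exp_pos _))
      · intro k
        have h1 : Real.exp (-(z n - e k n)^2 / 32) ≤ 1 :=
          Real.exp_le_one_iff.2 (by nlinarith [sq_nonneg (z n - e k n)])
        calc w k n * Real.exp (-(z n - e k n)^2 / 32) ≤ w k n * 1 :=
              mul_le_mul_of_nonneg_left h1 (le_of_lt (hwpos k n))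
          _ = w k n := mul_one _
    calc ewaW p e z (n+1) = ∑' k, w k n * Real.exp (-(z n - e k n)^2 / 32) := hWsucc
      _ ≤ ∑' k, (w k n * c + (w k n * e k n - w k n * μ) * (a * c / 16)) :=
          Summable.tsum_le_tsum keyk hs3 (hs1.add hs2)
      _ = (∑' k, w k n * c) + ∑' k, (w k n * e k n - w k n * μ) * (a * c / 16) :=
          Summable.tsum_add hs1 hs2
      _ = (∑' k, w k n) * c + ((∑' k, w k n * e k n) - (∑' k, w k n * μ)) * (a * c / 16) := by
          rw [tsum_mul_right, tsum_mul_right, Summable.tsum_sub (hswe n n) ((hsw n).mul_right μ)]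
      _ = ewaW p e z n * c := by
          rw [tsum_mul_right, hnum n, ← hμ, ← hWeq n]
          ring
  have tel : ∀ m : ℕ, ewaW p e z m ≤
      Real.exp (-(∑ n ∈ Finset.range m, (z n - ewaPred p e z n)^2) / 32) := by
    intro m
    induction m with
    | zero =>
        have h0 : ewaW p e z 0 = ∑' k, p k := by
          rw [ewaW]
          congr 1
          funext k
          simp
        rw [h0]
        simpa using hp1
    | succ m ih =>
        calc ewaW p e z (m+1) ≤ ewaW p e z m * Real.exp (-(z m - ewaPred p e z m)^2 / 32) :=
              step m
          _ ≤ Real.exp (-(∑ n ∈ Finset.range m, (z n - ewaPred p e z n)^2) / 32) *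
                Real.exp (-(z m - ewaPred p e z m)^2 / 32) :=
              mul_le_mul_of_nonneg_right ih (le_of_lt (Real.exp_pos _))
          _ = Real.exp (-(∑ n ∈ Finset.range (m+1), (z n - ewaPred p e z n)^2) / 32) := by
              rw [← Real.exp_add, Finset.sum_range_succ]
              congr 1
              ring
  have low : p K * Real.exp (-(∑ n ∈ Finset.range N, (z n - e K n)^2) / 32) ≤ ewaW p e z N :=
    Summable.le_tsum (hsw N) K fun j _ => le_of_lt (hwpos j N)
  have main := low.trans (tel N)
  have hlog := Real.log_le_log (mul_pos (hp K) (Real.exp_pos _)) main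
  rw [Real.log_mul (ne_of_gt (hp K)) (ne_of_gt (Real.exp_pos _)), Real.log_exp,
    Real.log_exp] at hlog
  rw [Real.log_div one_ne_zero (ne_of_gt (hp K)), Real.log_one]
  linarith

noncomputable def nclip (t : ℝ) : ℝ := max (-1) (min 1 t)

lemma nclip_abs_le (t : ℝ) : |nclip t| ≤ 1 := by
  rw [nclip, abs_le]
  exact ⟨le_max_left _ _, max_le (by norm_num) (min_le_left _ _)⟩

lemma nclip_loss_le {z t : ℝ} (hz : |z| ≤ 1) : (z - nclip t)^2 ≤ (z - t)^2 := by
  have hz' := abs_le.1 hz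
  rw [nclip]
  rcases le_total t (-1) with h | h
  · rw [min_eq_right (by linarith), max_eq_left (by linarith)]
    nlinarith
  · rcases le_total 1 t with h2 | h2
    · rw [min_eq_left h2, max_eq_right (by norm_num)]
      nlinarith
    · rw [min_eq_right h2, max_eq_right h]

lemma list_range_map_sum (F : ℕ → ℝ) (n : ℕ) :
    (((List.range n).map F).sum) = ∑ i ∈ Finset.range n, F i := by
  induction n with
  | zero => simp
  | succ m ih =>
      rw [List.range_succ, List.map_append, List.sum_append, Finset.sum_range_succ, ih]
      simp

lemma tsum_inv_sq_le : ∑' k : ℕ, (1 : ℝ) / ((k:ℝ)+1)^2 ≤ 2 := by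
  have hsum : ∀ n : ℕ, ∑ k ∈ Finset.range n, (1:ℝ)/((k:ℝ)+1)^2 ≤ 2 - 2/((n:ℝ)+1) := by
    intro n
    induction n with
    | zero => simp
    | succ m ih =>
        rw [Finset.sum_range_succ]
        have hm : (0:ℝ) < (m:ℝ) + 1 := by positivity
        have key : (1:ℝ)/((m:ℝ)+1)^2 ≤ 2/((m:ℝ)+1) - 2/((m:ℝ)+1+1) := by
          have heq : (2:ℝ)/((m:ℝ)+1) - 2/((m:ℝ)+1+1) = 2/(((m:ℝ)+1)*((m:ℝ)+1+1)) := by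
            field_simp
            ring
          rw [heq, div_le_div_iff₀ (by positivity) (by positivity)]
          nlinarith
        push_cast
        push_cast at ih key
        linarith
  apply Real.tsum_le_of_sum_range_le (fun n => by positivity)
  intro n
  have h1 := hsum n
  have h2 : (0:ℝ) < 2/((n:ℝ)+1) := by positivity
  linarith

lemma summable_inv_sq : Summable (fun k : ℕ => (1 : ℝ) / ((k:ℝ)+1)^2) := by
  have h : Summable (fun k : ℕ => (1 : ℝ) / (k:ℝ)^2) := by
    simpa using Real.summable_one_div_nat_pow.2 (by norm_num : 1 < 2)
  have h2 := (summable_nat_add_iff 1).2 h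
  simpa using h2

lemma nat_pair_le (a b : ℕ) : Nat.pair a b ≤ (a+b+1)^2 := by
  rw [Nat.pair]
  split <;> nlinarith

lemma net_exists {E : Type*} [MetricSpace E] {A : Set E} (hA : IsCompact A)
    (hne : A.Nonempty) {ε : ℝ} (hε : 0 < ε) :
    ∃ S : Finset E, ↑S ⊆ A ∧ S.card = coveringNumber A ε ∧
      (∀ a ∈ A, ∃ b ∈ S, dist a b ≤ ε) ∧ 1 ≤ coveringNumber A ε := by
  classical
  have htb := hA.totallyBounded
  rw [totallyBounded_iff_subset] at htb
  obtain ⟨t, hts, htf, hcov⟩ := htb {p : E × E | dist p.1 p.2 < ε} (Metric.dist_mem_uniformity hε)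
  set P : Set ℕ := {n : ℕ | ∃ S : Finset E, ↑S ⊆ A ∧ S.card = n ∧ ∀ a ∈ A, ∃ b ∈ S, dist a b ≤ ε}
    with hP
  have hPne : P.Nonempty := by
    refine ⟨htf.toFinset.card, htf.toFinset, ?_, rfl, ?_⟩
    · rw [Set.Finite.coe_toFinset]; exact hts
    · intro a ha
      obtain ⟨b, hb, hdb⟩ := Set.mem_iUnion₂.1 (hcov ha)
      exact ⟨b, htf.mem_toFinset.2 hb, le_of_lt hdb⟩
  have hmem : coveringNumber A ε ∈ P := Nat.sInf_mem hPne
  obtain ⟨S, hS1, hS2, hS3⟩ := hmem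
  refine ⟨S, hS1, hS2, hS3, ?_⟩
  obtain ⟨a, ha⟩ := hne
  obtain ⟨b, hb, _⟩ := hS3 a ha
  rw [← hS2]
  exact Finset.card_pos.2 ⟨b, hb⟩

end Helpers

open Real Filter

set_option maxHeartbeats 1600000 in
/-- Corollary 5: for a complex Banach space `𝓕` compactly embedded in `C(X; ℂ)` whose
unit ball satisfies `L = limsup_{ε→0} H_ε(U_𝓕)/log₂ᴹ(1/ε) ∈ (0,∞)`, the regret is
`O(L logᴹ N)` for each `F ∈ 𝓕`. -/
theorem stmt9 : ∃ C : ℝ, 0 < C ∧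
    ∀ (X : Type u) [MetricSpace X] [CompactSpace X]
      (𝓕 : Type v) [NormedAddCommGroup 𝓕] [NormedSpace ℂ 𝓕] [CompleteSpace 𝓕]
      (ι : 𝓕 →ₗ[ℂ] C(X, ℂ)) (M L : ℝ),
      0 < M →
      Function.Injective ι →
      IsCompact (⇑ι '' Metric.closedBall (0 : 𝓕) 1) →
      Filter.IsBoundedUnder (· ≤ ·) (nhdsWithin 0 (Set.Ioi 0))
        (fun ε : ℝ =>
          metricEntropy (⇑ι '' Metric.closedBall (0 : 𝓕) 1) ε /
            Real.logb 2 (1 / ε) ^ M) →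
      L = Filter.limsup (fun ε : ℝ =>
            metricEntropy (⇑ι '' Metric.closedBall (0 : 𝓕) 1) ε /
              Real.logb 2 (1 / ε) ^ M)
            (nhdsWithin 0 (Set.Ioi 0)) →
      0 < L →
      ∃ σ : List (X × ℂ) → X → ℂ,
        ∀ x : ℕ → X, ∀ y : ℕ → ℂ, (∀ n, ‖y n‖ ≤ 1) →
          ∀ f : 𝓕, ∃ N₀ : ℕ, ∀ N ≥ N₀,
            ∑ n ∈ Finset.range N, ‖y n - preds σ x y n‖ ^ 2 ≤
              ∑ n ∈ Finset.range N, ‖y n - ι f (x n)‖ ^ 2 +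
                C * L * Real.logb 2 N ^ M := by
  classical
  refine ⟨4000, by norm_num, ?_⟩
  intro X _ _ 𝓕 _ _ _ ι M L hM hinj hcpt hbd hLlim hL
  set A : Set C(X, ℂ) := ⇑ι '' Metric.closedBall (0 : 𝓕) 1 with hAdef
  have hne : A.Nonempty := ⟨ι 0, ⟨0, Metric.mem_closedBall_self (by norm_num), rfl⟩⟩
  -- minimal nets at scales (1/2)^u
  have hnets : ∀ u : ℕ, ∃ S : Finset C(X, ℂ), ↑S ⊆ A ∧
      S.card = coveringNumber A ((1/2:ℝ)^u) ∧
      (∀ a ∈ A, ∃ b ∈ S, dist a b ≤ (1/2:ℝ)^u) ∧ 1 ≤ coveringNumber A ((1/2:ℝ)^u) :=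
    fun u => net_exists hcpt hne (by positivity)
  choose T hT1 hT2 hT3 hT4 using hnets
  -- the experts
  set E : ℕ → X → ℂ := fun k xx =>
    ((((Nat.unpair (Nat.unpair k).1).1 : ℝ) + 1 : ℝ) : ℂ) *
      ((T ((Nat.unpair (Nat.unpair k).1).1 + (Nat.unpair (Nat.unpair k).1).2)).toList.getD
        (Nat.unpair k).2 0) xx
    with hE
  -- enumeration property
  have hEnum : ∀ r s : ℕ, ∀ g ∈ T (r+s), ∃ k : ℕ,
      (∀ xx, E k xx = (((r:ℝ)+1 : ℝ) : ℂ) * g xx) ∧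
      Real.log ((k:ℝ)+1) ≤
        2*(2*Real.log ((r:ℝ)+(s:ℝ)+2) + Real.log (((T (r+s)).card : ℝ)+1)) := by
    intro r s g hg
    have hgl : g ∈ (T (r+s)).toList := Finset.mem_toList.2 hg
    obtain ⟨i, hi⟩ := List.mem_iff_get.1 hgl
    refine ⟨Nat.pair (Nat.pair r s) i.val, ?_, ?_⟩
    · intro xx
      rw [hE]
      simp only [Nat.unpair_pair]
      congr 2
      rw [List.getD_eq_getElem _ _ i.isLt]
      simpa [List.get_eq_getElem] using hi
    · have hi1 : i.val + 1 ≤ (T (r+s)).card :=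
        Nat.succ_le_of_lt (lt_of_lt_of_eq i.isLt (Finset.length_toList _))
      have h1 : Nat.pair (Nat.pair r s) i.val ≤ (Nat.pair r s + i.val + 1)^2 := nat_pair_le _ _
      have h2 : Nat.pair r s ≤ (r+s+1)^2 := nat_pair_le r s
      have h3 : Nat.pair (Nat.pair r s) i.val + 1 ≤ ((r+s+2)^2*((T (r+s)).card+1))^2 := by
        have hb : Nat.pair r s + i.val + 1 ≤ (r+s+1)^2 + (T (r+s)).card := by omega
        have hb2 : (Nat.pair r s + i.val + 1)^2 ≤ ((r+s+1)^2 + (T (r+s)).card)^2 :=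
          Nat.pow_le_pow_left hb 2
        have hb3 : (r+s+1)^2 + (T (r+s)).card + 1 ≤ (r+s+2)^2*((T (r+s)).card+1) := by
          have e1 : (r+s+2)^2 = (r+s+1)^2 + (2*(r+s)+3) := by ring
          have e3 : (T (r+s)).card ≤ (r+s+2)^2 * (T (r+s)).card :=
            Nat.le_mul_of_pos_left _ (by positivity)
          have e4 : (r+s+2)^2*((T (r+s)).card+1) = (r+s+2)^2*(T (r+s)).card + (r+s+2)^2 := by
            ring
          omega
        have hb4 : ((r+s+1)^2 + (T (r+s)).card + 1)^2 ≤ ((r+s+2)^2*((T (r+s)).card+1))^2 :=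
          Nat.pow_le_pow_left hb3 2
        have hb5 : ((r+s+1)^2 + (T (r+s)).card + 1)^2
            = ((r+s+1)^2 + (T (r+s)).card)^2 + 2*((r+s+1)^2 + (T (r+s)).card) + 1 := by ring
        omega
      have hcast : ((Nat.pair (Nat.pair r s) i.val : ℕ):ℝ) + 1
          ≤ (((r:ℝ)+(s:ℝ)+2)^2*(((T (r+s)).card:ℝ)+1))^2 := by
        have := (Nat.cast_le (α := ℝ)).2 h3
        push_cast at this ⊢
        linarith
      have hpos1 : (0:ℝ) < ((r:ℝ)+(s:ℝ)+2)^2 := by positivity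
      have hpos2 : (0:ℝ) < ((T (r+s)).card:ℝ)+1 := by positivity
      calc Real.log ((Nat.pair (Nat.pair r s) i.val : ℝ)+1)
          ≤ Real.log ((((r:ℝ)+(s:ℝ)+2)^2*(((T (r+s)).card:ℝ)+1))^2) :=
            Real.log_le_log (by positivity) hcast
        _ = 2*(2*Real.log ((r:ℝ)+(s:ℝ)+2) + Real.log (((T (r+s)).card : ℝ)+1)) := by
            rw [Real.log_pow, Real.log_mul (ne_of_gt hpos1) (ne_of_gt hpos2), Real.log_pow]
            push_cast
            ring
  -- the prior
  set p : ℕ → ℝ := fun k => 1/(2*((k:ℝ)+1)^2) with hpdef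
  have hp : ∀ k, 0 < p k := fun k => by positivity
  have hps : Summable p := by
    have : p = fun k : ℕ => (1/2) * ((1:ℝ)/((k:ℝ)+1)^2) := by
      funext k
      rw [hpdef]
      field_simp
    rw [this]
    exact summable_inv_sq.mul_left _
  have hp1 : ∑' k, p k ≤ 1 := by
    have heq : ∑' k, p k = (1/2) * ∑' k : ℕ, (1:ℝ)/((k:ℝ)+1)^2 := by
      rw [← tsum_mul_left]
      congr 1
      funext k
      rw [hpdef]
      field_simp
    rw [heq]
    nlinarith [tsum_inv_sq_le]
  have hlogp : ∀ k : ℕ, Real.log (1/p k) = Real.log 2 + 2*Real.log ((k:ℝ)+1) := by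
    intro k
    rw [hpdef]
    have h1 : (1:ℝ)/(1/(2*((k:ℝ)+1)^2)) = 2*((k:ℝ)+1)^2 := by
      field_simp
    rw [h1, Real.log_mul (by norm_num) (by positivity), Real.log_pow]
    push_cast
    ring
  -- the strategy
  set eC : (ℂ → ℝ) → ℕ → X → ℝ := fun φ k xx => nclip (φ (E k xx)) with heCdef
  set σ : List (X × ℂ) → X → ℂ := fun h xx =>
    (((∑' k, p k * Real.exp (-((h.map (fun ab => (Complex.re ab.2 - eC Complex.re k ab.1)^2)).sum) / 32) * eC Complex.re k xx) /
      (∑' k, p k * Real.exp (-((h.map (fun ab => (Complex.re ab.2 - eC Complex.re k ab.1)^2)).sum) / 32)) : ℝ) : ℂ)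
    + (((∑' k, p k * Real.exp (-((h.map (fun ab => (Complex.im ab.2 - eC Complex.im k ab.1)^2)).sum) / 32) * eC Complex.im k xx) /
      (∑' k, p k * Real.exp (-((h.map (fun ab => (Complex.im ab.2 - eC Complex.im k ab.1)^2)).sum) / 32)) : ℝ) : ℂ) * Complex.I
    with hσ
  refine ⟨σ, ?_⟩
  intro x y hy f
  -- bridge
  have hbridge : ∀ n : ℕ,
      preds σ x y n =
        ((ewaPred p (fun k i => eC Complex.re k (x i)) (fun i => (y i).re) n : ℝ) : ℂ)
        + ((ewaPred p (fun k i => eC Complex.im k (x i)) (fun i => (y i).im) n : ℝ) : ℂ) * Complex.I := by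
    intro n
    have hl : ∀ (φ : ℂ → ℝ) (k : ℕ), (((List.range n).map (fun i => (x i, y i))).map
        (fun ab => (φ ab.2 - eC φ k ab.1)^2)).sum
        = ∑ i ∈ Finset.range n, (φ (y i) - eC φ k (x i))^2 := by
      intro φ k
      rw [List.map_map]
      exact list_range_map_sum (fun i => (φ (y i) - eC φ k (x i))^2) n
    rw [preds, hσ]
    simp only [hl]
    rfl
  -- comparator data
  set F : C(X, ℂ) := ι f with hF
  set B : ℝ := ‖F‖ with hB
  have hB0 : 0 ≤ B := norm_nonneg _
  set r : ℕ := ⌈‖f‖⌉₊ with hr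
  have hfr : ‖f‖ ≤ (r:ℝ)+1 := by
    have := Nat.le_ceil ‖f‖
    rw [hr]
    push_cast
    linarith
  -- approximating experts at every scale
  have happrox : ∀ s : ℕ, ∃ k : ℕ,
      (∀ xx, ‖F xx - E k xx‖ ≤ (1/2:ℝ)^s) ∧
      Real.log ((k:ℝ)+1) ≤ 2*(2*Real.log ((r:ℝ)+(s:ℝ)+2)
        + Real.log (((coveringNumber A ((1/2:ℝ)^(r+s)) : ℕ):ℝ)+1)) := by
    intro s
    set c : ℂ := (((r:ℝ)+1 : ℝ) : ℂ) with hc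
    have hcnorm : ‖c‖ = (r:ℝ)+1 := by
      rw [hc, Complex.norm_real, Real.norm_eq_abs, abs_of_pos (by positivity)]
    have hc0 : c ≠ 0 := by
      intro h
      rw [h] at hcnorm
      simp at hcnorm
      linarith [hcnorm]
    have hmem : ι (c⁻¹ • f) ∈ A := by
      refine ⟨c⁻¹ • f, ?_, rfl⟩
      rw [mem_closedBall_zero_iff, norm_smul, norm_inv, hcnorm]
      rw [inv_mul_le_iff₀ (by positivity)]
      linarith
    obtain ⟨g, hg, hgd⟩ := hT3 (r+s) _ hmem
    obtain ⟨k, hk1, hk2⟩ := hEnum r s g hg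
    refine ⟨k, ?_, by rw [← hT2 (r+s)]; exact hk2⟩
    intro xx
    have hev : (ι (c⁻¹ • f) : C(X, ℂ)) xx = c⁻¹ * F xx := by
      rw [map_smul, hF]
      simp [ContinuousMap.smul_apply, smul_eq_mul]
    have h1 : F xx - E k xx = c * ((ι (c⁻¹ • f) : C(X, ℂ)) xx - g xx) := by
      rw [hk1 xx, hev, mul_sub, ← mul_assoc, mul_inv_cancel₀ hc0, one_mul, hc]
    rw [h1, norm_mul, hcnorm]
    have h2 : ‖(ι (c⁻¹ • f) : C(X, ℂ)) xx - g xx‖ ≤ (1/2:ℝ)^(r+s) := by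
      rw [← dist_eq_norm]
      exact le_trans (ContinuousMap.dist_apply_le_dist xx) hgd
    have h3 : ((r:ℝ)+1) * (1/2:ℝ)^r ≤ 1 := by
      have hr2 : (r:ℝ)+1 ≤ 2^r := by
        have : r < 2^r := Nat.lt_two_pow_self
        have h4 : (r:ℝ) + 1 ≤ ((2^r : ℕ):ℝ) := by exact_mod_cast this
        push_cast at h4
        linarith
      have h5 : (1/2:ℝ)^r = ((2:ℝ)^r)⁻¹ := by
        rw [one_div, inv_pow]
      rw [h5, ← div_eq_mul_inv, div_le_one (by positivity)]
      exact hr2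
    calc ((r:ℝ)+1) * ‖(ι (c⁻¹ • f) : C(X, ℂ)) xx - g xx‖
        ≤ ((r:ℝ)+1) * (1/2:ℝ)^(r+s) := by
          apply mul_le_mul_of_nonneg_left h2
          positivity
      _ = (((r:ℝ)+1) * (1/2:ℝ)^r) * (1/2:ℝ)^s := by
          rw [pow_add]
          ring
      _ ≤ 1 * (1/2:ℝ)^s := by
          apply mul_le_mul_of_nonneg_right h3
          positivity
      _ = (1/2:ℝ)^s := one_mul _
  choose kf hkf1 hkf2 using happrox
  -- per-round comparison
  have hround : ∀ (φ : ℂ → ℝ), (∀ u, |φ u| ≤ ‖u‖) → (∀ u v : ℂ, φ u - φ v = φ (u - v)) →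
      ∀ (s n : ℕ), (φ (y n) - eC φ (kf s) (x n))^2
        ≤ (φ (y n) - φ (F (x n)))^2 + (3 + 2*B) * (1/2:ℝ)^s := by
    intro φ hφ1 hφ2 s n
    set z0 := φ (y n) with hz0
    set u0 := φ (E (kf s) (x n)) with hu0
    set v0 := φ (F (x n)) with hv0
    set w0 := eC φ (kf s) (x n) with hw0
    have hz1 : |z0| ≤ 1 := le_trans (hφ1 _) (hy n)
    have step1 : (z0 - w0)^2 ≤ (z0 - u0)^2 := nclip_loss_le hz1
    have hd : |u0 - v0| ≤ (1/2:ℝ)^s := by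
      rw [hu0, hv0, hφ2]
      refine le_trans (hφ1 _) ?_
      have h := hkf1 s (x n)
      rw [← norm_neg]
      simpa [neg_sub] using h
    have hv : |v0| ≤ B := le_trans (hφ1 _) (ContinuousMap.norm_coe_le_norm F (x n))
    clear_value z0 u0 v0 w0
    have hδ1 : (1/2:ℝ)^s ≤ 1 := pow_le_one₀ (by norm_num) (by norm_num)
    have hδ0 : (0:ℝ) ≤ (1/2:ℝ)^s := by positivity
    have hid : (z0 - u0)^2 = (z0 - v0)^2 - 2*(u0 - v0)*(z0 - v0) + (u0 - v0)^2 := by ring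
    have habs1 : |u0 - v0| * |z0 - v0| ≤ (1/2:ℝ)^s * (1 + B) := by
      apply mul_le_mul hd _ (abs_nonneg _) hδ0
      calc |z0 - v0| ≤ |z0| + |v0| := abs_sub _ _
        _ ≤ 1 + B := add_le_add hz1 hv
    have habs2 : -(2*(u0 - v0)*(z0 - v0)) ≤ 2*((1/2:ℝ)^s * (1 + B)) := by
      have h2 : |(u0 - v0)*(z0 - v0)| ≤ (1/2:ℝ)^s * (1 + B) := by
        rw [abs_mul]
        exact habs1
      have h3 := neg_abs_le ((u0 - v0)*(z0 - v0))
      nlinarith only [h2, h3]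
    have habs3 : (u0 - v0)^2 ≤ (1/2:ℝ)^s := by
      have h := sq_abs (u0 - v0)
      nlinarith only [h, hd, hδ1, hδ0, abs_nonneg (u0 - v0)]
    nlinarith only [step1, hid, habs2, habs3, hδ0, hB0]
  -- per-coordinate summed bound
  have hcoord : ∀ (φ : ℂ → ℝ), (∀ u, |φ u| ≤ ‖u‖) → (∀ u v : ℂ, φ u - φ v = φ (u - v)) →
      ∀ (s N : ℕ),
      ∑ n ∈ Finset.range N, (φ (y n) - ewaPred p (fun k i => eC φ k (x i)) (fun i => φ (y i)) n)^2
        ≤ ∑ n ∈ Finset.range N, (φ (y n) - φ (F (x n)))^2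
          + (N:ℝ) * ((3 + 2*B) * (1/2:ℝ)^s) + 32 * Real.log (1/p (kf s)) := by
    intro φ h1 h2 s N
    have hreg := ewa_regret p hp hps hp1 (fun k i => eC φ k (x i)) (fun k i => nclip_abs_le _)
      (fun i => φ (y i)) (fun i => le_trans (h1 _) (hy i)) (kf s) N
    have hsum : ∑ n ∈ Finset.range N, (φ (y n) - eC φ (kf s) (x n))^2
        ≤ ∑ n ∈ Finset.range N, ((φ (y n) - φ (F (x n)))^2 + (3 + 2*B) * (1/2:ℝ)^s) :=
      Finset.sum_le_sum (fun n _ => hround φ h1 h2 s n)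
    rw [Finset.sum_add_distrib, Finset.sum_const, Finset.card_range, nsmul_eq_mul] at hsum
    calc ∑ n ∈ Finset.range N, (φ (y n) - ewaPred p (fun k i => eC φ k (x i)) (fun i => φ (y i)) n)^2
        ≤ ∑ n ∈ Finset.range N, (φ (y n) - eC φ (kf s) (x n))^2 + 32 * Real.log (1/p (kf s)) :=
          hreg
      _ ≤ ∑ n ∈ Finset.range N, (φ (y n) - φ (F (x n)))^2
          + (N:ℝ) * ((3 + 2*B) * (1/2:ℝ)^s) + 32 * Real.log (1/p (kf s)) := by
          linarith only [hsum]
  -- decomposition of complex square losses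
  have hsq : ∀ u w : ℂ, ‖u - w‖^2 = (u.re - w.re)^2 + (u.im - w.im)^2 := by
    intro u w
    rw [Complex.sq_norm, Complex.normSq_apply, Complex.sub_re,
      Complex.sub_im]
    ring
  have hφre : ∀ u : ℂ, |Complex.re u| ≤ ‖u‖ := fun u => by
    exact Complex.abs_re_le_norm u
  have hφim : ∀ u : ℂ, |Complex.im u| ≤ ‖u‖ := fun u => by
    exact Complex.abs_im_le_norm u
  have hφre2 : ∀ u v : ℂ, Complex.re u - Complex.re v = Complex.re (u - v) := fun u v =>
    (Complex.sub_re u v).symm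
  have hφim2 : ∀ u v : ℂ, Complex.im u - Complex.im v = Complex.im (u - v) := fun u v =>
    (Complex.sub_im u v).symm
  have halg : ∀ N : ℕ, ∑ n ∈ Finset.range N, ‖y n - preds σ x y n‖^2 =
      (∑ n ∈ Finset.range N,
        ((y n).re - ewaPred p (fun k i => eC Complex.re k (x i)) (fun i => (y i).re) n)^2)
      + ∑ n ∈ Finset.range N,
        ((y n).im - ewaPred p (fun k i => eC Complex.im k (x i)) (fun i => (y i).im) n)^2 := by
    intro N
    rw [← Finset.sum_add_distrib]
    apply Finset.sum_congr rfl
    intro n _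
    rw [hsq, hbridge n]
    simp [Complex.add_re, Complex.add_im, Complex.ofReal_re, Complex.ofReal_im,
      Complex.mul_re, Complex.mul_im, Complex.I_re, Complex.I_im]
  have hcompdec : ∀ N : ℕ, ∑ n ∈ Finset.range N, ‖y n - F (x n)‖^2 =
      (∑ n ∈ Finset.range N, ((y n).re - (F (x n)).re)^2)
      + ∑ n ∈ Finset.range N, ((y n).im - (F (x n)).im)^2 := by
    intro N
    rw [← Finset.sum_add_distrib]
    apply Finset.sum_congr rfl
    intro n _
    rw [hsq]
  -- total regret bound for any scale s
  have htot : ∀ (s N : ℕ),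
      ∑ n ∈ Finset.range N, ‖y n - preds σ x y n‖^2 ≤
        ∑ n ∈ Finset.range N, ‖y n - F (x n)‖^2
        + 2*(N:ℝ)*((3 + 2*B) * (1/2:ℝ)^s) + 64 * Real.log (1/p (kf s)) := by
    intro s N
    have hre := hcoord Complex.re hφre hφre2 s N
    have him := hcoord Complex.im hφim hφim2 s N
    rw [halg N, hcompdec N]
    linarith only [hre, him]
  -- bound on the log-prior of the chosen expert
  have hplog : ∀ s : ℕ, 64 * Real.log (1/p (kf s)) ≤
      320*Real.log 2 + 512*Real.log ((r:ℝ)+(s:ℝ)+2)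
      + 256*Real.log 2 * metricEntropy A ((1/2:ℝ)^(r+s)) := by
    intro s
    rw [hlogp]
    have h1 := hkf2 s
    have hc1 : (1:ℝ) ≤ ((coveringNumber A ((1/2:ℝ)^(r+s)) : ℕ):ℝ) := by
      exact_mod_cast hT4 (r+s)
    have hlog2 : Real.log 2 ≠ 0 := ne_of_gt (Real.log_pos (by norm_num))
    have hEnt : Real.log 2 * metricEntropy A ((1/2:ℝ)^(r+s))
        = Real.log ((coveringNumber A ((1/2:ℝ)^(r+s)) : ℕ):ℝ) := by
      rw [metricEntropy, Real.logb, mul_comm, div_mul_cancel₀ _ hlog2]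
    have hlogcov : Real.log (((coveringNumber A ((1/2:ℝ)^(r+s)) : ℕ):ℝ)+1)
        ≤ Real.log 2 + Real.log 2 * metricEntropy A ((1/2:ℝ)^(r+s)) := by
      rw [hEnt]
      calc Real.log (((coveringNumber A ((1/2:ℝ)^(r+s)) : ℕ):ℝ)+1)
          ≤ Real.log (2*((coveringNumber A ((1/2:ℝ)^(r+s)) : ℕ):ℝ)) :=
            Real.log_le_log (by positivity) (by linarith)
        _ = Real.log 2 + Real.log ((coveringNumber A ((1/2:ℝ)^(r+s)) : ℕ):ℝ) :=
            Real.log_mul (by norm_num) (by positivity)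
    linarith only [h1, hlogcov]
  -- eventual entropy bound
  have hent : ∃ s₀ : ℕ, 1 ≤ s₀ ∧ ∀ u : ℕ, s₀ ≤ u →
      metricEntropy A ((1/2:ℝ)^u) ≤ 2*L*(u:ℝ)^M := by
    have hlt : Filter.limsup (fun ε : ℝ => metricEntropy A ε / Real.logb 2 (1/ε) ^ M)
        (nhdsWithin 0 (Set.Ioi 0)) < 2*L := by
      rw [← hLlim]
      linarith
    have hev := Filter.eventually_lt_of_limsup_lt hlt hbd
    rw [eventually_nhdsWithin_iff, Metric.eventually_nhds_iff] at hev
    obtain ⟨δ, hδ, hevδ⟩ := hev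
    obtain ⟨n0, hn0⟩ := exists_pow_lt_of_lt_one hδ (by norm_num : (1/2:ℝ) < 1)
    refine ⟨n0+1, by omega, ?_⟩
    intro u hu
    have hu1 : 1 ≤ u := by omega
    have hεpos : (0:ℝ) < (1/2:ℝ)^u := by positivity
    have hdist : dist ((1/2:ℝ)^u) 0 < δ := by
      rw [Real.dist_eq, sub_zero, abs_of_pos hεpos]
      calc (1/2:ℝ)^u ≤ (1/2:ℝ)^n0 :=
            pow_le_pow_of_le_one (by norm_num) (by norm_num) (by omega)
        _ < δ := hn0
    have h2 := hevδ hdist (Set.mem_Ioi.2 hεpos)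
    have hlogb : Real.logb 2 (1/((1/2:ℝ)^u)) = (u:ℝ) := by
      rw [one_div, ← inv_pow, one_div, inv_inv]
      rw [← Real.rpow_natCast 2 u, Real.logb_rpow (by norm_num) (by norm_num)]
    rw [hlogb] at h2
    have hupos : (0:ℝ) < (u:ℝ)^M := by
      apply Real.rpow_pos_of_pos
      exact_mod_cast hu1
    have h3 := (div_lt_iff₀ hupos).1 h2
    nlinarith only [h3]
  obtain ⟨s₀, hs₀1, hs₀⟩ := hent
  -- asymptotics
  set uu : ℕ → ℝ := fun N => Real.logb 2 (N:ℝ) with huu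
  have huinf : Tendsto uu atTop atTop :=
    (Real.tendsto_logb_atTop one_lt_two).comp tendsto_natCast_atTop_atTop
  set sN : ℕ → ℕ := fun N => Nat.clog 2 N with hsN
  have hP0 : ∀ᶠ N : ℕ in atTop, 2*(N:ℝ)*((3+2*B)*(1/2:ℝ)^(sN N)) ≤ 2*(3+2*B) := by
    filter_upwards [eventually_ge_atTop 1] with N hN
    have hNp : (N:ℝ) ≤ 2^(Nat.clog 2 N) := by exact_mod_cast Nat.le_pow_clog one_lt_two N
    have h1 : (N:ℝ)*(1/2:ℝ)^(sN N) ≤ 1 := by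
      rw [hsN, one_div, inv_pow, ← div_eq_mul_inv, div_le_one (by positivity)]
      exact hNp
    have h2 : (0:ℝ) ≤ 3+2*B := by linarith
    nlinarith only [mul_le_mul_of_nonneg_left h1 h2]
  have huu1 : ∀ᶠ N : ℕ in atTop, 1 ≤ uu N := by
    filter_upwards [eventually_ge_atTop 2] with N hN
    have h2 : (2:ℝ) ≤ (N:ℝ) := by exact_mod_cast hN
    calc (1:ℝ) = Real.logb 2 2 := (Real.logb_self_eq_one (by norm_num)).symm
      _ ≤ uu N := (Real.logb_le_logb (by norm_num) (by norm_num) (by linarith)).2 h2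
  have hclogu : ∀ᶠ N : ℕ in atTop,
      (Nat.clog 2 N : ℝ) ≤ uu N + 1 ∧ uu N ≤ (Nat.clog 2 N : ℝ) := by
    filter_upwards [eventually_ge_atTop 2] with N hN
    have hNpos : (0:ℝ) < (N:ℝ) := by
      have : (2:ℝ) ≤ (N:ℝ) := by exact_mod_cast hN
      linarith
    constructor
    · have hc1 : 1 ≤ Nat.clog 2 N := by
        by_contra h
        push_neg at h
        have h0 : N ≤ 2^0 := (Nat.clog_le_iff_le_pow one_lt_two).1 (by omega)
        omega
      have hlt := Nat.pow_pred_clog_lt_self one_lt_two (show 1 < N by omega)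
      have hcast : ((2:ℝ))^((Nat.clog 2 N - 1 : ℕ)) < (N:ℝ) := by
        exact_mod_cast hlt
      have hlb := Real.logb_lt_logb (by norm_num : (1:ℝ) < 2) (by positivity) hcast
      have hre : Real.logb 2 ((2:ℝ)^((Nat.clog 2 N - 1 : ℕ)))
          = ((Nat.clog 2 N - 1 : ℕ):ℝ) := by
        rw [← Real.rpow_natCast 2 _, Real.logb_rpow (by norm_num) (by norm_num)]
      rw [hre, Nat.cast_sub hc1] at hlb
      push_cast at hlb
      linarith
    · have hNp : (N:ℝ) ≤ 2^(Nat.clog 2 N) := by exact_mod_cast Nat.le_pow_clog one_lt_two N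
      have hle : uu N ≤ Real.logb 2 ((2:ℝ)^(Nat.clog 2 N)) :=
        (Real.logb_le_logb (by norm_num) hNpos (by positivity)).2 hNp
      rwa [← Real.rpow_natCast 2 _, Real.logb_rpow (by norm_num) (by norm_num)] at hle
  set c1 : ℝ := 2*(3+2*B) + 222 + 512*Real.log ((r:ℝ)+4) with hc1def
  have hC1 : ∀ᶠ N : ℕ in atTop, c1 ≤ 1500*L*(uu N)^M := by
    have htop : Tendsto (fun N => (uu N)^M) atTop atTop :=
      (tendsto_rpow_atTop hM).comp huinf
    filter_upwards [htop.eventually_ge_atTop (c1/(1500*L))] with N hN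
    have hpos : (0:ℝ) < 1500*L := by linarith
    calc c1 = (c1/(1500*L))*(1500*L) := by field_simp
      _ ≤ (uu N)^M * (1500*L) := mul_le_mul_of_nonneg_right hN (le_of_lt hpos)
      _ = 1500*L*(uu N)^M := by ring
  have hC2 : ∀ᶠ N : ℕ in atTop,
      512*Real.log ((r:ℝ)+((sN N : ℕ):ℝ)+2) ≤ 512*Real.log ((r:ℝ)+4) + 512*Real.log (uu N) := by
    filter_upwards [huu1, hclogu] with N h1 h2
    obtain ⟨h2a, h2b⟩ := h2
    have hr0 : (0:ℝ) ≤ (r:ℝ) := Nat.cast_nonneg r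
    have harg : (r:ℝ)+((sN N : ℕ):ℝ)+2 ≤ ((r:ℝ)+4)*(uu N) := by
      rw [hsN]
      nlinarith only [h1, h2a, hr0]
    have hlog := Real.log_le_log (by positivity) harg
    rw [Real.log_mul (by positivity) (by positivity)] at hlog
    linarith only [hlog]
  have hC3 : ∀ᶠ N : ℕ in atTop, 512*Real.log (uu N) ≤ 500*L*(uu N)^M := by
    have hlo := isLittleO_log_rpow_atTop hM
    have hev2 := hlo.def (show (0:ℝ) < (500*L)/512 by positivity)
    filter_upwards [huinf.eventually hev2, huu1] with N hN h1
    have hN' : |Real.log (uu N)| ≤ ((500*L)/512) * |(uu N)^M| := by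
      simpa [Real.norm_eq_abs] using hN
    have hlognn : 0 ≤ Real.log (uu N) := Real.log_nonneg h1
    have hupos : (0:ℝ) < (uu N)^M := Real.rpow_pos_of_pos (by linarith) M
    rw [abs_of_nonneg hlognn, abs_of_pos hupos] at hN'
    have heq : 512*(((500*L)/512) * (uu N)^M) = 500*L*(uu N)^M := by ring
    linarith only [hN', heq]
  have hs₀ev : ∀ᶠ N : ℕ in atTop, s₀ ≤ r + sN N := by
    filter_upwards [eventually_ge_atTop (2^s₀)] with N hN
    have h1 : s₀ ≤ Nat.clog 2 N := by
      calc s₀ = Nat.clog 2 (2^s₀) := (Nat.clog_pow 2 s₀ one_lt_two).symm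
        _ ≤ Nat.clog 2 N := Nat.clog_mono_right 2 hN
    have h2 : sN N = Nat.clog 2 N := rfl
    omega
  have hratio : ∀ᶠ N : ℕ in atTop, (((r + sN N : ℕ)):ℝ)^M ≤ 2*(uu N)^M := by
    have hvlim : Tendsto (fun N => (((r + sN N : ℕ)):ℝ)/(uu N)) atTop (nhds 1) := by
      have hup : Tendsto (fun N => 1 + ((r:ℝ)+1)/(uu N)) atTop (nhds 1) := by
        have h0 : Tendsto (fun N => ((r:ℝ)+1)/(uu N)) atTop (nhds 0) :=
          Tendsto.div_atTop tendsto_const_nhds huinf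
        simpa using tendsto_const_nhds.add h0
      apply tendsto_of_tendsto_of_tendsto_of_le_of_le' tendsto_const_nhds hup
      · filter_upwards [huu1, hclogu] with N h1 h2
        obtain ⟨h2a, h2b⟩ := h2
        rw [le_div_iff₀ (by linarith)]
        have hr0 : (0:ℝ) ≤ (r:ℝ) := Nat.cast_nonneg r
        rw [hsN]
        push_cast
        linarith
      · filter_upwards [huu1, hclogu] with N h1 h2
        obtain ⟨h2a, h2b⟩ := h2
        rw [div_le_iff₀ (by linarith)]
        have hfld : (1 + ((r:ℝ)+1)/(uu N))*(uu N) = uu N + ((r:ℝ)+1) := by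
          field_simp
        rw [hfld, hsN]
        push_cast
        linarith
    have hvM : Tendsto (fun N => ((((r + sN N : ℕ)):ℝ)/(uu N))^M) atTop (nhds 1) := by
      have := hvlim.rpow_const (p := M) (Or.inl one_ne_zero)
      simpa [Real.one_rpow] using this
    filter_upwards [hvM.eventually_lt_const (by norm_num : (1:ℝ) < 2), huu1] with N hN h1
    have hu0 : (0:ℝ) < uu N := by linarith
    have hvnn : (0:ℝ) ≤ (((r + sN N : ℕ)):ℝ)/(uu N) := by positivity
    have heq : (((r + sN N : ℕ)):ℝ) = ((((r + sN N : ℕ)):ℝ)/(uu N)) * (uu N) := by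
      field_simp
    rw [heq, Real.mul_rpow hvnn (le_of_lt hu0)]
    have hup : (0:ℝ) ≤ (uu N)^M := le_of_lt (Real.rpow_pos_of_pos hu0 M)
    nlinarith only [hN, hup]
  have hfinal : ∀ᶠ N : ℕ in atTop,
      2*(N:ℝ)*((3+2*B)*(1/2:ℝ)^(sN N)) + 64 * Real.log (1/p (kf (sN N)))
        ≤ 4000*L*(uu N)^M := by
    filter_upwards [hP0, hC1, hC2, hC3, hs₀ev, hratio, huu1] with N h0 h1 h2 h3 h4 h5 h6
    have hpl := hplog (sN N)
    have hH := hs₀ (r + sN N) h4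
    have hlog2pos : (0:ℝ) < Real.log 2 := Real.log_pos (by norm_num)
    have hlog2lt : Real.log 2 < 0.6931471808 := Real.log_two_lt_d9
    have hup : (0:ℝ) ≤ (uu N)^M := le_of_lt (Real.rpow_pos_of_pos (by linarith) M)
    have hstep : 256*Real.log 2 * metricEntropy A ((1/2:ℝ)^(r + sN N))
        ≤ 256*Real.log 2 * (2*L*(2*(uu N)^M)) := by
      apply mul_le_mul_of_nonneg_left _ (by positivity)
      calc metricEntropy A ((1/2:ℝ)^(r + sN N)) ≤ 2*L*(((r + sN N : ℕ)):ℝ)^M := hH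
        _ ≤ 2*L*(2*(uu N)^M) := by nlinarith only [h5, hL]
    have hnum : 256*Real.log 2*(2*L*(2*(uu N)^M)) ≤ 1500*L*(uu N)^M := by
      nlinarith only [hlog2lt, hlog2pos, hL, hup, mul_nonneg (le_of_lt hL) hup]
    have h320 : 320*Real.log 2 ≤ 222 := by nlinarith only [hlog2lt, hlog2pos]
    have hLu : (0:ℝ) ≤ L*(uu N)^M := mul_nonneg (le_of_lt hL) hup
    have hplN : 64 * Real.log (1/p (kf (sN N))) ≤
        320*Real.log 2 + 512*Real.log ((r:ℝ)+((sN N : ℕ):ℝ)+2)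
        + 256*Real.log 2 * metricEntropy A ((1/2:ℝ)^(r + sN N)) := hpl
    linarith only [h0, h1, h2, h3, hplN, hstep, hnum, h320, hLu, hc1def]
  rw [eventually_atTop] at hfinal
  obtain ⟨N₀, hN₀⟩ := hfinal
  refine ⟨N₀, ?_⟩
  intro N hN
  have h1 := htot (sN N) N
  have h2 := hN₀ N hN
  calc ∑ n ∈ Finset.range N, ‖y n - preds σ x y n‖ ^ 2
      ≤ ∑ n ∈ Finset.range N, ‖y n - F (x n)‖ ^ 2
        + 2*(N:ℝ)*((3 + 2*B) * (1/2:ℝ)^(sN N)) + 64 * Real.log (1/p (kf (sN N))) := h1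
    _ ≤ ∑ n ∈ Finset.range N, ‖y n - F (x n)‖ ^ 2 + 4000*L*(uu N)^M := by
        linarith only [h2]
    _ = ∑ n ∈ Finset.range N, ‖y n - F (x n)‖ ^ 2 + 4000 * L * Real.logb 2 (N:ℝ) ^ M := rfl
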